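/- arXiv:1612.08838 — 8 statements merged into one kernel-verified Lean document; each statement's English description precedes it below -/
import Mathlib

section
/- Let X be a topological space satisfying the countable chain condition. Then every countable κ-metric on X is a κ-metric, i.e., if ρ : X × RC(X) → [0,∞) satisfies (K1)–(K3) and (K4_ω), then for every totally ordered (by inclusion) non-decreasing family {C_α : α < λ} of regular closed sets and every x ∈ X, ρ(x, cl(⋃_{α<λ} C_α)) = inf_{α<λ} ρ(x, C_α). -/
open Set Topology

section Defs

variable {X : Type*}

/-- A set is regular closed if it equals the closure of its interior. -/
def IsRegClosed [TopologicalSpace X] (C : Set X) : Prop := closure (interior C) = C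

/-- A set is regular open if it equals the interior of its closure. -/
def IsRegOpen [TopologicalSpace X] (V : Set X) : Prop := interior (closure V) = V

/-- A countable κ-metric: axioms (K1)-(K3) and (K4_ω). -/
structure IsCountKappaMetric [TopologicalSpace X] (ρ : X → Set X → ℝ) : Prop where
  nonneg : ∀ x C, IsRegClosed C → 0 ≤ ρ x C
  k1 : ∀ x C, IsRegClosed C → (ρ x C = 0 ↔ x ∈ C)
  k2 : ∀ x C D, IsRegClosed C → IsRegClosed D → C ⊆ D → ρ x D ≤ ρ x C
  k3 : ∀ C, IsRegClosed C → Continuous fun x => ρ x C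
  k4omega : ∀ C : ℕ → Set X, (∀ n, IsRegClosed (C n)) → (∀ n, C n ⊆ C (n + 1)) →
    ∀ x, ρ x (closure (⋃ n, C n)) = ⨅ n, ρ x (C n)

/-- Axiom (K4): the infimum identity for arbitrary nonempty totally ordered
(by inclusion) families of regular closed sets. -/
def K4Chains [TopologicalSpace X] (ρ : X → Set X → ℝ) : Prop :=
  ∀ 𝒞 : Set (Set X), 𝒞.Nonempty → (∀ C ∈ 𝒞, IsRegClosed C) →
    (∀ C ∈ 𝒞, ∀ D ∈ 𝒞, C ⊆ D ∨ D ⊆ C) →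
    ∀ x, ρ x (closure (⋃₀ 𝒞)) = sInf ((ρ x) '' 𝒞)

/-- A (full) κ-metric: axioms (K1)-(K4). -/
structure IsKappaMetric [TopologicalSpace X] (ρ : X → Set X → ℝ)
    extends IsCountKappaMetric ρ : Prop where
  k4 : K4Chains ρ

/-- Countable chain condition. -/
def CCCSpace (X : Type*) [TopologicalSpace X] : Prop :=
  ∀ 𝒪 : Set (Set X), (∀ U ∈ 𝒪, IsOpen U ∧ U.Nonempty) →
    𝒪.PairwiseDisjoint id → 𝒪.Countable

/-- Pseudocompactness: every continuous real-valued function is bounded. -/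
def Pseudocompact (X : Type*) [TopologicalSpace X] : Prop :=
  ∀ f : X → ℝ, Continuous f → ∃ M, ∀ x, |f x| ≤ M

/-- d-open maps. -/
def IsDOpen {Y : Type*} [TopologicalSpace X] [TopologicalSpace Y] (f : X → Y) : Prop :=
  ∀ U : Set X, IsOpen U → f '' U ⊆ interior (closure (f '' U))

/-- Q-admissible families of regular open sets with respect to ρ. -/
def QAdmissible [TopologicalSpace X] (ρ : X → Set X → ℝ) (P : Set (Set X)) : Prop :=
  (∀ V ∈ P, IsRegOpen V) ∧
  (∀ V ∈ P, ∀ q : ℚ,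
    interior ((fun x => ρ x (closure V)) ⁻¹' Iic (q : ℝ)) ∈ P ∧
    interior ((fun x => ρ x (closure V)) ⁻¹' Ici (q : ℝ)) ∈ P) ∧
  (∀ V ∈ P, interior Vᶜ ∈ P) ∧
  (∀ U ∈ P, ∀ V ∈ P, U ∩ V ∈ P ∧ interior (closure (U ∪ V)) ∈ P)

/-- The equivalence relation ∼_P. -/
def pSetoid (P : Set (Set X)) : Setoid X where
  r x y := ∀ V ∈ P, (x ∈ V ↔ y ∈ V)
  iseqv := ⟨fun _ _ _ => Iff.rfl, fun h V hV => (h V hV).symm,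
    fun h1 h2 V hV => (h1 V hV).trans (h2 V hV)⟩

/-- The quotient X_P. -/
def XP (P : Set (Set X)) : Type _ := Quotient (pSetoid P)

/-- The quotient map q : X → X_P. -/
def qP (P : Set (Set X)) : X → XP P := Quotient.mk (pSetoid P)

/-- The topology on X_P generated by images of members of P. -/
def topXP [TopologicalSpace X] (P : Set (Set X)) : TopologicalSpace (XP P) :=
  TopologicalSpace.generateFrom ((fun V => qP P '' V) '' P)

end Defs

section Aux
variable {X : Type*} [TopologicalSpace X]

lemma isRegClosed_closure_of_isOpen {U : Set X} (hU : IsOpen U) :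
    IsRegClosed (closure U) := by
  apply subset_antisymm (closure_minimal interior_subset isClosed_closure)
  exact closure_mono (interior_maximal subset_closure hU)

lemma closure_sUnion_eq (𝒞 : Set (Set X)) (hreg : ∀ C ∈ 𝒞, IsRegClosed C) :
    closure (⋃₀ 𝒞) = closure (⋃ C ∈ 𝒞, interior C) := by
  apply subset_antisymm
  · apply closure_minimal _ isClosed_closure
    rintro x ⟨C, hC, hx⟩
    have h1 : C ⊆ closure (⋃ C ∈ 𝒞, interior C) := by
      conv_lhs => rw [← hreg C hC]
      exact closure_mono (subset_biUnion_of_mem hC)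
    exact h1 hx
  · refine closure_mono ?_
    intro x hx
    simp only [mem_iUnion] at hx
    obtain ⟨C, hC, hx⟩ := hx
    exact ⟨C, hC, interior_subset hx⟩

/-- In a ccc space, the closure of the union of a chain of regular closed sets equals
the closure of the union of a countable subfamily containing a given element. -/
lemma ccc_countable_subchain (hccc : CCCSpace X) (𝒞 : Set (Set X))
    (hreg : ∀ C ∈ 𝒞, IsRegClosed C)
    {C₀ : Set X} (hC₀ : C₀ ∈ 𝒞) :
    ∃ 𝒟 : Set (Set X), 𝒟 ⊆ 𝒞 ∧ 𝒟.Countable ∧ C₀ ∈ 𝒟 ∧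
      closure (⋃₀ 𝒟) = closure (⋃₀ 𝒞) := by
  classical
  set good : Set (Set X) := {U | IsOpen U ∧ U.Nonempty ∧ ∃ C ∈ 𝒞, U ⊆ interior C} with hgood
  set S : Set (Set (Set X)) := {𝒪 | 𝒪 ⊆ good ∧ 𝒪.PairwiseDisjoint id} with hS
  obtain ⟨𝒪, h𝒪max⟩ : ∃ 𝒪, Maximal (· ∈ S) 𝒪 := by
    apply zorn_subset
    intro c hcS hchain
    refine ⟨⋃₀ c, ⟨?_, ?_⟩, fun s hs => subset_sUnion_of_mem hs⟩
    · intro U hU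
      obtain ⟨a, hac, hUa⟩ := hU
      exact (hcS hac).1 hUa
    · intro U hU V hV hne
      obtain ⟨a, hac, hUa⟩ := hU
      obtain ⟨b, hbc, hVb⟩ := hV
      rcases hchain.total hac hbc with hab | hba
      · exact (hcS hbc).2 (hab hUa) hVb hne
      · exact (hcS hac).2 hUa (hba hVb) hne
  have h𝒪good : 𝒪 ⊆ good := h𝒪max.1.1
  have h𝒪cnt : 𝒪.Countable :=
    hccc 𝒪 (fun U hU => ⟨(h𝒪good hU).1, (h𝒪good hU).2.1⟩) h𝒪max.1.2
  -- choose for each U ∈ 𝒪 a member of 𝒞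
  have hchoice : ∀ U ∈ 𝒪, ∃ C ∈ 𝒞, U ⊆ interior C := fun U hU => (h𝒪good hU).2.2
  choose! pick hpick1 hpick2 using hchoice
  refine ⟨insert C₀ (pick '' 𝒪), ?_, ?_, mem_insert _ _, ?_⟩
  · rintro D (rfl | ⟨U, hU, rfl⟩)
    · exact hC₀
    · exact hpick1 U hU
  · exact (h𝒪cnt.image pick).insert C₀
  · -- density
    have hdense : (⋃ C ∈ 𝒞, interior C) ⊆ closure (⋃₀ 𝒪) := by
      intro x hx
      simp only [mem_iUnion] at hx
      obtain ⟨C, hC, hx⟩ := hx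
      rw [mem_closure_iff]
      intro W hW hxW
      by_contra hemp
      rw [not_nonempty_iff_eq_empty] at hemp
      set V := W ∩ interior C with hV
      have hVopen : IsOpen V := hW.inter isOpen_interior
      have hVne : V.Nonempty := ⟨x, hxW, hx⟩
      have hVgood : V ∈ good := ⟨hVopen, hVne, C, hC, inter_subset_right⟩
      have hVnotin : V ∉ 𝒪 := by
        intro hVin
        have : V ⊆ ⋃₀ 𝒪 := subset_sUnion_of_mem hVin
        obtain ⟨y, hy⟩ := hVne
        have : y ∈ W ∩ ⋃₀ 𝒪 := ⟨hy.1, this hy⟩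
        rw [hemp] at this; exact this
      have hdisVO : ∀ U ∈ 𝒪, Disjoint V U := by
        intro U hU
        refine disjoint_left.mpr fun y hyV hyU => ?_
        have : y ∈ W ∩ ⋃₀ 𝒪 := ⟨hyV.1, U, hU, hyU⟩
        rw [hemp] at this; exact this
      have hins : insert V 𝒪 ∈ S := by
        constructor
        · exact insert_subset hVgood h𝒪good
        · intro A hA B hB hne
          rcases hA with rfl | hA
          · rcases hB with rfl | hB
            · exact absurd rfl hne
            · exact hdisVO B hB
          · rcases hB with rfl | hB
            · exact (hdisVO A hA).symm
            · exact h𝒪max.1.2 hA hB hne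
      have := h𝒪max.2 hins (subset_insert V 𝒪)
      exact hVnotin (this (mem_insert V 𝒪))
    apply subset_antisymm
    · apply closure_mono
      apply sUnion_subset
      rintro D (rfl | ⟨U, hU, rfl⟩)
      · exact subset_sUnion_of_mem hC₀
      · exact subset_sUnion_of_mem (hpick1 U hU)
    · rw [closure_sUnion_eq 𝒞 hreg]
      refine closure_minimal (hdense.trans (closure_mono ?_)) isClosed_closure
      intro y hy
      obtain ⟨U, hU, hyU⟩ := hy
      exact ⟨pick U, Or.inr ⟨U, hU, rfl⟩, interior_subset (hpick2 U hU hyU)⟩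

end Aux

theorem stmt0' {X : Type*} [TopologicalSpace X] (hccc : CCCSpace X)
    (ρ : X → Set X → ℝ)
    (nonneg : ∀ x C, IsRegClosed C → 0 ≤ ρ x C)
    (k2 : ∀ x C D, IsRegClosed C → IsRegClosed D → C ⊆ D → ρ x D ≤ ρ x C)
    (k4omega : ∀ C : ℕ → Set X, (∀ n, IsRegClosed (C n)) → (∀ n, C n ⊆ C (n + 1)) →
      ∀ x, ρ x (closure (⋃ n, C n)) = ⨅ n, ρ x (C n)) :
    ∀ 𝒞 : Set (Set X), 𝒞.Nonempty → (∀ C ∈ 𝒞, IsRegClosed C) →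
      (∀ C ∈ 𝒞, ∀ D ∈ 𝒞, C ⊆ D ∨ D ⊆ C) →
      ∀ x, ρ x (closure (⋃₀ 𝒞)) = sInf ((ρ x) '' 𝒞) := by
  intro 𝒞 hne hreg hchain x
  classical
  obtain ⟨C₀, hC₀⟩ := hne
  obtain ⟨𝒟, h𝒟sub, h𝒟cnt, hC₀𝒟, h𝒟cl⟩ := ccc_countable_subchain hccc 𝒞 hreg hC₀
  obtain ⟨f, hf⟩ := h𝒟cnt.exists_eq_range ⟨C₀, hC₀𝒟⟩
  have hfmem : ∀ n, f n ∈ 𝒟 := by intro n; rw [hf]; exact mem_range_self n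
  let E : ℕ → Set X := fun n =>
    Nat.rec (f 0) (fun n En => if f (n + 1) ⊆ En then En else f (n + 1)) n
  have hEstep : ∀ n : ℕ, E (n + 1) = @ite _ (f (n + 1) ⊆ E n) (Classical.propDecidable _) (E n) (f (n + 1)) := fun n => rfl
  have hEmem : ∀ n, E n ∈ 𝒟 := by
    intro n
    induction n with
    | zero => exact hfmem 0
    | succ n ih =>
      rw [hEstep]
      rcases em (f (n + 1) ⊆ E n) with h | h
      · rw [if_pos h]; exact ih
      · rw [if_neg h]; exact hfmem (n + 1)
  have hEmono : ∀ n, E n ⊆ E (n + 1) := by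
    intro n
    rw [hEstep]
    rcases em (f (n + 1) ⊆ E n) with h | h
    · rw [if_pos h]
    · rw [if_neg h]
      rcases hchain _ (h𝒟sub (hEmem n)) _ (h𝒟sub (hfmem (n + 1))) with h1 | h1
      · exact h1
      · exact absurd h1 h
  have hfE : ∀ n, f n ⊆ E n := by
    intro n
    cases n with
    | zero => exact subset_rfl
    | succ n =>
      rw [hEstep]
      rcases em (f (n + 1) ⊆ E n) with h | h
      · rw [if_pos h]; exact h
      · rw [if_neg h]
  have hUnion : closure (⋃ n, E n) = closure (⋃₀ 𝒞) := by
    rw [← h𝒟cl]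
    apply subset_antisymm
    · exact closure_mono (iUnion_subset fun n => subset_sUnion_of_mem (hEmem n))
    · apply closure_mono
      intro y hy
      obtain ⟨D, hD, hyD⟩ := hy
      rw [hf] at hD
      obtain ⟨n, rfl⟩ := hD
      exact mem_iUnion.mpr ⟨n, hfE n hyD⟩
  have key := k4omega E (fun n => hreg _ (h𝒟sub (hEmem n))) hEmono x
  rw [hUnion] at key
  have hregcl : IsRegClosed (closure (⋃₀ 𝒞)) := by
    rw [closure_sUnion_eq 𝒞 hreg]
    exact isRegClosed_closure_of_isOpen (isOpen_biUnion fun C _ => isOpen_interior)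
  have hlb : ∀ r ∈ (ρ x) '' 𝒞, ρ x (closure (⋃₀ 𝒞)) ≤ r := by
    rintro r ⟨C, hC, rfl⟩
    exact k2 x C _ (hreg C hC) hregcl ((subset_sUnion_of_mem hC).trans subset_closure)
  apply le_antisymm
  · exact le_csInf (Set.Nonempty.image _ ⟨C₀, hC₀⟩) hlb
  · rw [key]
    have hbdd : BddBelow ((ρ x) '' 𝒞) :=
      ⟨0, by rintro r ⟨C, hC, rfl⟩; exact nonneg x C (hreg C hC)⟩
    exact le_ciInf fun n => csInf_le hbdd ⟨E n, h𝒟sub (hEmem n), rfl⟩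

/-- On a ccc space, every countable κ-metric is a κ-metric. -/
theorem stmt0 {X : Type*} [TopologicalSpace X] (hccc : CCCSpace X)
    (ρ : X → Set X → ℝ) (hρ : IsCountKappaMetric ρ) : K4Chains ρ := by
  exact stmt0' hccc ρ hρ.nonneg hρ.k2 hρ.k4omega
end

section
/- Let τ be an infinite cardinal, U a free ultrafilter on τ, and X = τ ∪ {U} ⊆ βτ with the subspace topology. Then every regular closed subset of X is clopen, i.e., RC(X) = CO(X). -/
open Set Topology

section Ult

variable {τ : Type*} (U : Ultrafilter τ)

/-- The space X = τ ∪ {U} ⊆ βτ, as a subspace of the space of ultrafilters on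
the discrete space τ. -/
def UltSp : Type _ := {u : Ultrafilter τ // (∃ a, u = pure a) ∨ u = U}

instance : TopologicalSpace (UltSp U) :=
  instTopologicalSpaceSubtype

/-- The point of X corresponding to the ultrafilter U. -/
def UltSp.pt : UltSp U := ⟨U, Or.inr rfl⟩

/-- The point of X corresponding to an element a of τ. -/
def UltSp.ofBase (a : τ) : UltSp U := ⟨pure a, Or.inl ⟨a, rfl⟩⟩

/-- "C ∩ τ ∈ U", for a subset C of X. -/
def UltSp.traceMem (C : Set (UltSp U)) : Prop := {a : τ | UltSp.ofBase U a ∈ C} ∈ U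

/-- U is a free ultrafilter. -/
def UltSp.Free : Prop := ∀ a : τ, U ≠ pure a

/-- The indicator "κ-metric" ρ(x,C) = 0 iff x ∈ C, else 1. -/
noncomputable def UltSp.rho : UltSp U → Set (UltSp U) → ℝ :=
  fun x C => Cᶜ.indicator (fun _ => (1 : ℝ)) x

end Ult

/-!
Every point of τ is isolated in X, so only the point U can keep a closed set C from being open.
The basic neighbourhoods of U are the sets `{u | s ∈ u}` with `s ∈ U`. If U lies in
`C = closure (interior C)` but not in `interior C`, then the trace of `interior C` on τ belongs
to U, and its basic neighbourhood lies in `insert U (interior C) ⊆ C`.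
-/

namespace UltSp

variable {τ : Type*} (U : Ultrafilter τ)

def basic (s : Set τ) : Set (UltSp U) := {x | s ∈ x.1}

theorem isOpen_basic (s : Set τ) : IsOpen (basic U s) :=
  (ultrafilter_isOpen_basic s).preimage continuous_subtype_val

theorem ofBase_mem_basic {a : τ} {s : Set τ} : ofBase U a ∈ basic U s ↔ a ∈ s :=
  Ultrafilter.mem_pure

theorem eq_ofBase_or_eq_pt (x : UltSp U) : (∃ a, x = ofBase U a) ∨ x = pt U := by
  rcases x with ⟨u, ⟨a, rfl⟩ | rfl⟩
  · exact Or.inl ⟨a, rfl⟩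
  · exact Or.inr rfl

theorem basic_singleton (a : τ) : basic U {a} = {ofBase U a} := by
  ext x
  refine ⟨fun h => Subtype.ext (Ultrafilter.coe_injective (x.1.neBot.eq_pure_iff.2 h)), ?_⟩
  rintro rfl
  exact Ultrafilter.mem_pure.2 rfl

theorem isOpen_singleton_ofBase (a : τ) : IsOpen {ofBase U a} :=
  basic_singleton U a ▸ isOpen_basic U {a}

theorem basic_trace_subset (S : Set (UltSp U)) :
    basic U {a | ofBase U a ∈ S} ⊆ insert (pt U) S := by
  intro x hx
  rcases eq_ofBase_or_eq_pt U x with ⟨a, rfl⟩ | rfl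
  · exact Or.inr ((ofBase_mem_basic U).1 hx)
  · exact Or.inl rfl

theorem traceMem_of_mem_closure {S : Set (UltSp U)} (hcl : pt U ∈ closure S)
    (hS : pt U ∉ S) : traceMem U S := by
  by_contra htrace
  obtain ⟨x, hx, hxS⟩ := mem_closure_iff.1 hcl _ (isOpen_basic U _)
    (Ultrafilter.compl_mem_iff_notMem.2 htrace)
  rcases eq_ofBase_or_eq_pt U x with ⟨a, rfl⟩ | rfl
  · exact (ofBase_mem_basic U).1 hx hxS
  · exact hS hxS

end UltSp

theorem stmt2_general {τ : Type*} (U : Ultrafilter τ)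
    (C : Set (UltSp U)) (hC : IsRegClosed C) : IsClopen C := by
  refine ⟨hC ▸ isClosed_closure, isOpen_iff_mem_nhds.2 fun x hx => ?_⟩
  rcases UltSp.eq_ofBase_or_eq_pt U x with ⟨a, rfl⟩ | rfl
  · exact mem_nhds_iff.2 ⟨_, singleton_subset_iff.2 hx, UltSp.isOpen_singleton_ofBase U a, rfl⟩
  by_cases hint : UltSp.pt U ∈ interior C
  · exact mem_interior_iff_mem_nhds.1 hint
  have htrace : UltSp.traceMem U (interior C) :=
    UltSp.traceMem_of_mem_closure U (by rwa [hC]) hint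
  exact mem_nhds_iff.2 ⟨_, (UltSp.basic_trace_subset U _).trans (insert_subset hx interior_subset),
    UltSp.isOpen_basic U _, htrace⟩

/-- in X = τ ∪ {U}, every regular closed set is clopen. -/
theorem stmt2 {τ : Type*} [Infinite τ] (U : Ultrafilter τ) (hfree : UltSp.Free U)
    (C : Set (UltSp U)) (hC : IsRegClosed C) : IsClopen C :=
  stmt2_general U C hC
end

section
/- Let τ be a measurable cardinal and U a τ-complete free ultrafilter on τ. Then the space X = τ ∪ {U} ⊆ βτ admits a countable κ-metric, namely ρ(x,C) = 0 if x ∈ C and ρ(x,C) = 1 otherwise. -/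
open Set Topology

section AuxLemmas

variable {τ : Type*} (U : Ultrafilter τ)

/-- Basic open sets in X: trace of basic open sets of βτ. -/
def auxS (A : Set τ) : Set (UltSp U) := {x | A ∈ x.1}

lemma auxS_isOpen (A : Set τ) : IsOpen (auxS U A) :=
  (ultrafilter_isOpen_basic A).preimage continuous_subtype_val

lemma auxS_mono {A B : Set τ} (h : A ⊆ B) : auxS U A ⊆ auxS U B :=
  fun _ hx => Filter.mem_of_superset hx h

lemma pt_mem_auxS {A : Set τ} : UltSp.pt U ∈ auxS U A ↔ A ∈ U := Iff.rfl

lemma ofBase_mem_auxS {A : Set τ} {a : τ} : UltSp.ofBase U a ∈ auxS U A ↔ a ∈ A :=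
  Ultrafilter.mem_pure

/-- Every element of X is `ofBase a` or `pt`. -/
lemma aux_cases (x : UltSp U) : (∃ a, x = UltSp.ofBase U a) ∨ x = UltSp.pt U := by
  rcases x.2 with ⟨a, ha⟩ | h
  · exact Or.inl ⟨a, Subtype.ext ha⟩
  · exact Or.inr (Subtype.ext h)

/-- The points of τ are isolated in X. -/
lemma aux_isolated (hfree : UltSp.Free U) (a : τ) :
    IsOpen ({UltSp.ofBase U a} : Set (UltSp U)) := by
  have : ({UltSp.ofBase U a} : Set (UltSp U)) = auxS U {a} := by
    ext x
    constructor
    · rintro rfl; exact (ofBase_mem_auxS U).2 rfl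
    · intro hx
      rcases aux_cases U x with ⟨b, rfl⟩ | rfl
      · have : b ∈ ({a} : Set τ) := (ofBase_mem_auxS U).1 hx
        rw [mem_singleton_iff] at this; rw [this]; exact rfl
      · exfalso
        obtain ⟨c, hc, hUc⟩ := Ultrafilter.eq_pure_of_finite_mem (finite_singleton a) hx
        exact hfree c hUc
  rw [this]; exact auxS_isOpen U {a}

/-- Basic neighborhoods of `pt`. -/
lemma aux_nhds_basis {V : Set (UltSp U)} (hV : IsOpen V) (hpt : UltSp.pt U ∈ V) :
    ∃ A ∈ U, auxS U A ⊆ V := by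
  replace hV := isOpen_induced_iff.1 hV
  obtain ⟨W, hW, rfl⟩ := hV
  obtain ⟨B, ⟨A, rfl⟩, hUB, hBW⟩ :=
    ultrafilterBasis_is_basis.exists_subset_of_mem_open hpt hW
  exact ⟨A, hUB, fun x hx => hBW hx⟩

/-- A regular closed set containing `pt` is a neighborhood of `pt`. -/
lemma aux_regClosed_nbhd {C : Set (UltSp U)} (hC : IsRegClosed C)
    (hpt : UltSp.pt U ∈ C) : ∃ A ∈ U, auxS U A ⊆ C := by
  by_cases hi : UltSp.pt U ∈ interior C
  · obtain ⟨A, hA, hAs⟩ := aux_nhds_basis U isOpen_interior hi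
    exact ⟨A, hA, hAs.trans interior_subset⟩
  · set T : Set τ := {a | UltSp.ofBase U a ∈ interior C} with hT
    have hTU : T ∈ U := by
      by_contra hTn
      have hTc : Tᶜ ∈ U := Ultrafilter.compl_mem_iff_notMem.2 hTn
      have hcl : UltSp.pt U ∈ closure (interior C) := by rw [hC]; exact hpt
      obtain ⟨y, hy1, hy2⟩ := (mem_closure_iff.1 hcl) (auxS U Tᶜ)
        (auxS_isOpen U Tᶜ) hTc
      rcases aux_cases U y with ⟨a, rfl⟩ | rfl
      · exact ((ofBase_mem_auxS U).1 hy1) hy2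
      · exact hi hy2
    refine ⟨T, hTU, fun x hx => ?_⟩
    rcases aux_cases U x with ⟨a, rfl⟩ | rfl
    · exact interior_subset ((ofBase_mem_auxS U).1 hx)
    · exact hpt

lemma aux_isClosed {C : Set (UltSp U)} (hC : IsRegClosed C) : IsClosed C := by
  rw [← hC]; exact isClosed_closure

lemma rho_of_mem {C : Set (UltSp U)} {x : UltSp U} (hx : x ∈ C) :
    UltSp.rho U x C = 0 := by
  simp [UltSp.rho, Set.indicator_of_notMem, hx]

lemma rho_of_not_mem {C : Set (UltSp U)} {x : UltSp U} (hx : x ∉ C) :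
    UltSp.rho U x C = 1 := by
  simp [UltSp.rho, Set.indicator_of_mem, hx]

lemma rho_nonneg (x : UltSp U) (C : Set (UltSp U)) : 0 ≤ UltSp.rho U x C := by
  by_cases hx : x ∈ C
  · rw [rho_of_mem U hx]
  · rw [rho_of_not_mem U hx]; norm_num

end AuxLemmas
/-- for measurable τ and τ-complete free U, the two-valued ρ is a
countable κ-metric on X = τ ∪ {U}. -/
theorem stmt3 {τ : Type*} (U : Ultrafilter τ)
    (huncount : Cardinal.aleph0 < Cardinal.mk τ)
    (hfree : UltSp.Free U)
    (hcomplete : ∀ 𝒜 : Set (Set τ), (∀ A ∈ 𝒜, A ∈ U) →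
      Cardinal.mk 𝒜 < Cardinal.mk τ → ⋂₀ 𝒜 ∈ U) :
    IsCountKappaMetric (UltSp.rho U) := by
  constructor
  · intro x C _; exact rho_nonneg U x C
  · intro x C _
    constructor
    · intro h
      by_contra hx
      rw [rho_of_not_mem U hx] at h
      norm_num at h
    · exact rho_of_mem U
  · intro x C D _ _ hCD
    by_cases hx : x ∈ D
    · rw [rho_of_mem U hx]; exact rho_nonneg U x C
    · rw [rho_of_not_mem U hx, rho_of_not_mem U (fun h => hx (hCD h))]
  · intro C hC
    rw [continuous_iff_continuousAt]
    intro x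
    rcases aux_cases U x with ⟨a, rfl⟩ | rfl
    · -- isolated point
      refine Filter.EventuallyEq.continuousAt (y := UltSp.rho U (UltSp.ofBase U a) C) ?_
      filter_upwards [(aux_isolated U hfree a).mem_nhds rfl] with y hy
      rw [mem_singleton_iff] at hy; rw [hy]
    · by_cases hpt : UltSp.pt U ∈ C
      · obtain ⟨A, hA, hAs⟩ := aux_regClosed_nbhd U hC hpt
        refine Filter.EventuallyEq.continuousAt (y := UltSp.rho U (UltSp.pt U) C) ?_
        filter_upwards [(auxS_isOpen U A).mem_nhds ((pt_mem_auxS U).2 hA)] with y hy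
        rw [rho_of_mem U (hAs hy), rho_of_mem U hpt]
      · refine Filter.EventuallyEq.continuousAt (y := UltSp.rho U (UltSp.pt U) C) ?_
        filter_upwards [(aux_isClosed U hC).isOpen_compl.mem_nhds hpt] with y hy
        rw [rho_of_not_mem U hy, rho_of_not_mem U hpt]
  · intro C hC _ x
    have hbdd : BddBelow (Set.range fun n => UltSp.rho U x (C n)) := by
      refine ⟨0, fun r hr => ?_⟩
      obtain ⟨n, rfl⟩ := hr
      exact rho_nonneg U x (C n)
    by_cases hx : x ∈ closure (⋃ n, C n)
    · have hex : ∃ n, x ∈ C n := by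
        rcases aux_cases U x with ⟨a, rfl⟩ | rfl
        · obtain ⟨y, hy1, hy2⟩ := mem_closure_iff.1 hx {UltSp.ofBase U a}
            (aux_isolated U hfree a) rfl
          rw [mem_singleton_iff] at hy1
          rw [← hy1]
          exact mem_iUnion.1 hy2
        · by_contra hno
          push_neg at hno
          have hA : ∀ n, ∃ A ∈ U, auxS U A ⊆ (C n)ᶜ := fun n =>
            aux_nhds_basis U (aux_isClosed U (hC n)).isOpen_compl (hno n)
          choose A hAU hAs using hA
          have hcard : Cardinal.mk (Set.range A) < Cardinal.mk τ := by
            refine lt_of_le_of_lt ?_ huncount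
            exact Cardinal.mk_le_aleph0_iff.2 (countable_range A).to_subtype
          have hint : ⋂₀ Set.range A ∈ U :=
            hcomplete (Set.range A) (by rintro B ⟨n, rfl⟩; exact hAU n) hcard
          obtain ⟨y, hy1, hy2⟩ := mem_closure_iff.1 hx (auxS U (⋂₀ Set.range A))
            (auxS_isOpen U _) hint
          obtain ⟨n, hn⟩ := mem_iUnion.1 hy2
          exact hAs n (auxS_mono U (sInter_subset_of_mem (Set.mem_range_self n)) hy1) hn
      obtain ⟨n, hn⟩ := hex
      rw [rho_of_mem U hx]
      have h1 : (⨅ m, UltSp.rho U x (C m)) ≤ 0 :=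
        (ciInf_le hbdd n).trans_eq (rho_of_mem U hn)
      have h2 : (0 : ℝ) ≤ ⨅ m, UltSp.rho U x (C m) :=
        le_ciInf fun m => rho_nonneg U x (C m)
      exact (le_antisymm h1 h2).symm
    · rw [rho_of_not_mem U hx]
      have : ∀ n, UltSp.rho U x (C n) = 1 := fun n =>
        rho_of_not_mem U (fun h => hx (subset_closure (Set.subset_iUnion C n h)))
      simp only [this]
      exact (ciInf_const).symm
end

section
/- Let τ be an infinite cardinal, U a free ultrafilter on τ, and X = τ ∪ {U} ⊆ βτ. If the function ρ : X × RC(X) → {0,1} given by ρ(x,C) = 0 iff x ∈ C is a countable κ-metric on X, then U is ℵ₁-complete (σ-complete): every countable intersection of members of U belongs to U. -/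
open Set Topology

section Aux

variable {τ : Type*} (U : Ultrafilter τ)

lemma aux_regClosed_closure {Y : Type*} [TopologicalSpace Y] {S : Set Y} (hS : IsOpen S) :
    IsRegClosed (closure S) := by
  refine subset_antisymm ?_ (closure_mono (interior_maximal subset_closure hS))
  simpa using closure_mono (interior_subset (s := closure S))

lemma aux_singleton_basic (hfree : UltSp.Free U) (a : τ) :
    {x : UltSp U | {a} ∈ x.1} = {UltSp.ofBase U a} := by
  ext x
  simp only [Set.mem_setOf_eq, Set.mem_singleton_iff]
  constructor
  · intro h
    rcases x.2 with ⟨b, hb⟩ | hU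
    · have hb' : b ∈ ({a} : Set τ) := by
        rw [hb] at h; simpa using h
      apply Subtype.ext
      rw [hb, Set.mem_singleton_iff.mp hb']
      rfl
    · exfalso
      rw [hU] at h
      obtain ⟨c, hc, hUc⟩ := Ultrafilter.eq_pure_of_finite_mem (Set.finite_singleton a) h
      exact hfree c hUc
  · rintro rfl
    simp [UltSp.ofBase]

lemma aux_isOpen_image (hfree : UltSp.Free U) (E : Set τ) :
    IsOpen (UltSp.ofBase U '' E) := by
  have : UltSp.ofBase U '' E = ⋃ a ∈ E, {x : UltSp U | {a} ∈ x.1} := by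
    simp only [aux_singleton_basic U hfree]
    ext x; simp [Set.mem_image, eq_comm]
  rw [this]
  refine isOpen_biUnion fun a _ => ?_
  exact (ultrafilter_isOpen_basic ({a} : Set τ)).preimage continuous_subtype_val

lemma aux_pt_mem_closure (S : Set (UltSp U)) (h : {a | UltSp.ofBase U a ∈ S} ∈ U) :
    UltSp.pt U ∈ closure S := by
  rw [mem_closure_iff]
  intro V hV hpt
  obtain ⟨W, hW, rfl⟩ := isOpen_induced_iff.mp hV
  obtain ⟨t, ht, hUt, htW⟩ := (ultrafilterBasis_is_basis.isOpen_iff.mp hW) U hpt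
  obtain ⟨s, rfl⟩ := ht
  have hsU : s ∈ U := hUt
  obtain ⟨a, has, haS⟩ := Ultrafilter.nonempty_of_mem (U.inter_mem hsU h)
  refine ⟨UltSp.ofBase U a, ?_, haS⟩
  exact htW (by simpa [UltSp.ofBase] using has)

lemma aux_pt_not_mem_closure (E : Set τ) (h : Eᶜ ∈ U) :
    UltSp.pt U ∉ closure (UltSp.ofBase U '' E) := by
  have hO : IsOpen {x : UltSp U | Eᶜ ∈ x.1} :=
    (ultrafilter_isOpen_basic (Eᶜ)).preimage continuous_subtype_val
  have hsub : UltSp.ofBase U '' E ⊆ {x : UltSp U | Eᶜ ∈ x.1}ᶜ := by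
    rintro _ ⟨a, ha, rfl⟩ hmem
    exact (Set.mem_compl_iff _ _).mp (by exact hmem) ha
  intro hcl
  have := closure_minimal hsub (isClosed_compl_iff.mpr hO) hcl
  exact this h

end Aux

/-- if the two-valued ρ is a countable κ-metric on X = τ ∪ {U},
then U is ℵ₁-complete. -/
theorem stmt5 {τ : Type*} [Infinite τ] (U : Ultrafilter τ) (hfree : UltSp.Free U)
    (hρ : IsCountKappaMetric (UltSp.rho U)) :
    ∀ D : ℕ → Set τ, (∀ n, D n ∈ U) → (⋂ n, D n) ∈ U := by
  intro D hD
  by_contra h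
  have hcompl : (⋂ n, D n)ᶜ ∈ U := Ultrafilter.compl_mem_iff_notMem.mpr h
  -- increasing sequence of small sets
  set E : ℕ → Set τ := fun n => (⋂ k : Fin (n + 1), D k)ᶜ with hE
  have hEc : ∀ n, (E n)ᶜ ∈ U := by
    intro n
    simp only [hE, compl_compl]
    exact Filter.iInter_mem.mpr fun k => hD k
  have hEmono : ∀ n, E n ⊆ E (n + 1) := by
    intro n
    refine compl_subset_compl.mpr ?_
    intro x hx
    simp only [Set.mem_iInter] at hx ⊢
    intro k
    exact hx ⟨k.1, lt_trans k.2 (Nat.lt_succ_self _)⟩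
  have hEunion : (⋂ n, D n)ᶜ ⊆ ⋃ n, E n := by
    intro x hx
    rw [Set.mem_compl_iff, Set.mem_iInter] at hx
    push_neg at hx
    obtain ⟨m, hm⟩ := hx
    refine Set.mem_iUnion.mpr ⟨m, ?_⟩
    simp only [hE, Set.mem_compl_iff, Set.mem_iInter]
    push_neg
    exact ⟨Fin.last m, hm⟩
  set S : ℕ → Set (UltSp U) := fun n => UltSp.ofBase U '' E n with hS
  set C : ℕ → Set (UltSp U) := fun n => closure (S n) with hC
  have hreg : ∀ n, IsRegClosed (C n) := fun n =>
    aux_regClosed_closure (aux_isOpen_image U hfree (E n))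
  have hchain : ∀ n, C n ⊆ C (n + 1) := fun n =>
    closure_mono (Set.image_mono (hEmono n))
  have key := hρ.k4omega C hreg hchain (UltSp.pt U)
  -- RHS = 1
  have hnot : ∀ n, UltSp.pt U ∉ C n := fun n =>
    aux_pt_not_mem_closure U (E n) (hEc n)
  have hrhs : ∀ n, UltSp.rho U (UltSp.pt U) (C n) = 1 := by
    intro n
    exact Set.indicator_of_mem (hnot n) fun _ => (1 : ℝ)
  -- LHS = 0
  have hmemU : UltSp.pt U ∈ closure (⋃ n, C n) := by
    have h1 : UltSp.pt U ∈ closure (⋃ n, S n) := by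
      refine aux_pt_mem_closure U _ (Filter.mem_of_superset hcompl ?_)
      intro a ha
      obtain ⟨n, hn⟩ := Set.mem_iUnion.mp (hEunion ha)
      exact Set.mem_iUnion.mpr ⟨n, Set.mem_image_of_mem _ hn⟩
    refine closure_mono (Set.iUnion_mono fun n => subset_closure) h1
  have hlhs : UltSp.rho U (UltSp.pt U) (closure (⋃ n, C n)) = 0 := by
    exact Set.indicator_of_notMem (by simpa using hmemU) fun _ => (1 : ℝ)
  rw [hlhs] at key
  have : (⨅ n, UltSp.rho U (UltSp.pt U) (C n)) = 1 := by
    simp only [hrhs]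
    exact ciInf_const
  rw [this] at key
  exact one_ne_zero key.symm
end

section
/- Let X be a countably κ-metrizable space with countable κ-metric ρ, and let P ⊆ RO(X) be a Q-admissible family. Then for each V ∈ P there exists an increasing sequence {V_n : n ∈ ω} ⊆ P of regular open sets with V = ⋃_n V_n and V_n ⊆ cl V_n ⊆ V_{n+1} ⊆ V for each n. -/
open Set Topology

/-
Write `W = int (X \ V)`, which lies in `P`. As `V` is regular open, `cl W = X \ V`, so the continuous
function `f = ρ(·, cl W)` is positive exactly on `V` by (K1). The sets
`V_n = int f⁻¹[1/(n+1), ∞)` belong to `P` by Q-admissibility, exhaust `V`, and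
`cl V_n ⊆ f⁻¹[1/(n+1), ∞) ⊆ f⁻¹(1/(n+2), ∞) ⊆ V_{n+1}`.
-/

section

variable {X : Type*} [TopologicalSpace X]

theorem IsRegOpen.closure_interior_compl {V : Set X} (hV : IsRegOpen V) :
    closure (interior Vᶜ) = Vᶜ := by
  rw [interior_compl, closure_compl, hV]

theorem IsRegOpen.isRegClosed_compl {V : Set X} (hV : IsRegOpen V) : IsRegClosed Vᶜ :=
  hV.closure_interior_compl

theorem IsCountKappaMetric.pos_iff_notMem {ρ : X → Set X → ℝ} (hρ : IsCountKappaMetric ρ)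
    {C : Set X} (hC : IsRegClosed C) (x : X) : 0 < ρ x C ↔ x ∉ C := by
  rw [← hρ.k1 x C hC, (hρ.nonneg x C hC).lt_iff_ne']

theorem Continuous.closure_interior_preimage_Ici_subset {f : X → ℝ} (hf : Continuous f)
    {a b : ℝ} (hba : b < a) : closure (interior (f ⁻¹' Ici a)) ⊆ interior (f ⁻¹' Ici b) :=
  calc closure (interior (f ⁻¹' Ici a))
      ⊆ f ⁻¹' Ici a := closure_minimal interior_subset (isClosed_Ici.preimage hf)
    _ ⊆ f ⁻¹' Ioi b := preimage_mono fun _ hx => hba.trans_le hx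
    _ ⊆ interior (f ⁻¹' Ici b) :=
      interior_maximal (preimage_mono Ioi_subset_Ici_self) (isOpen_Ioi.preimage hf)

theorem Continuous.iUnion_interior_preimage_Ici_inv_succ {f : X → ℝ} (hf : Continuous f) :
    ⋃ n : ℕ, interior (f ⁻¹' Ici ((n : ℝ) + 1)⁻¹) = f ⁻¹' Ioi 0 := by
  refine subset_antisymm (iUnion_subset fun n x hx => ?_) fun x hx => ?_
  · have hx' : ((n : ℝ) + 1)⁻¹ ≤ f x := (interior_subset hx : x ∈ f ⁻¹' Ici _)
    exact Nat.inv_pos_of_nat.trans_le hx'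
  · obtain ⟨n, hn⟩ := exists_nat_one_div_lt (mem_Ioi.mp (mem_preimage.mp hx))
    refine mem_iUnion.mpr ⟨n, ?_⟩
    refine interior_maximal (preimage_mono Ioi_subset_Ici_self) (isOpen_Ioi.preimage hf) ?_
    simpa only [one_div, mem_preimage, mem_Ioi] using hn

end

/-- each member of a Q-admissible family is an increasing union of
members V_n with cl V_n ⊆ V_{n+1} ⊆ V. -/
theorem stmt7 {X : Type*} [TopologicalSpace X] (ρ : X → Set X → ℝ)
    (hρ : IsCountKappaMetric ρ) (P : Set (Set X)) (hP : QAdmissible ρ P)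
    (V : Set X) (hV : V ∈ P) :
    ∃ Vn : ℕ → Set X, (∀ n, Vn n ∈ P) ∧ (∀ n, IsRegOpen (Vn n)) ∧
      V = ⋃ n, Vn n ∧
      ∀ n, Vn n ⊆ closure (Vn n) ∧ closure (Vn n) ⊆ Vn (n + 1) ∧ Vn (n + 1) ⊆ V := by
  obtain ⟨hreg, hq, hcompl, -⟩ := hP
  have hVc : IsRegClosed Vᶜ := (hreg V hV).isRegClosed_compl
  set f : X → ℝ := fun x => ρ x Vᶜ
  have hf : Continuous f := hρ.k3 _ hVc
  have hfV : f ⁻¹' Ioi 0 = V := by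
    ext x
    simp only [f, mem_preimage, mem_Ioi, hρ.pos_iff_notMem hVc, mem_compl_iff, not_not]
  set Vn : ℕ → Set X := fun n => interior (f ⁻¹' Ici ((n : ℝ) + 1)⁻¹)
  have hVnP : ∀ n, Vn n ∈ P := fun n => by
    have h := (hq _ (hcompl V hV) ((n : ℚ) + 1)⁻¹).2
    rw [(hreg V hV).closure_interior_compl] at h
    simpa using h
  have hV_eq : V = ⋃ n, Vn n := (hfV ▸ hf.iUnion_interior_preimage_Ici_inv_succ).symm
  refine ⟨Vn, hVnP, fun n => hreg _ (hVnP n), hV_eq, fun n => ⟨subset_closure, ?_, ?_⟩⟩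
  · refine hf.closure_interior_preimage_Ici_subset ?_
    gcongr
    linarith
  · exact hV_eq ▸ subset_iUnion Vn (n + 1)
end

section
/- Let X be a pseudocompact countably κ-metrizable space, with countable κ-metric ρ, and let P be a countable Q-admissible family containing X. Then for every continuous map h : X → [0,1] there exist a countable Q-admissible family P' ⊇ P and a continuous map g : X_{P'} → [0,1] such that h = g ∘ q_{P'}, where q_{P'} : X → X_{P'} is the quotient map. -/
open Set Topology

/-!
For rational `q`, the regular open sets `int cl h⁻¹(-∞, q)` and `int cl h⁻¹(q, ∞)` are sandwiched
between `h⁻¹(-∞, q)` and `h⁻¹(-∞, q]` (resp. `h⁻¹(q, ∞)` and `h⁻¹[q, ∞)`). Adjoining these countably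
many sets to `P` and closing under the countably many admissibility operations in `ω` rounds gives a
countable Q-admissible `P'`. Points identified by `∼_{P'}` cannot be separated by a rational, so `h`
descends to `X_{P'}`, and the preimage of an open ray is the union of the images of the adjoined
sets for the rationals inside the ray.
-/

section RegOpen

variable {X : Type*} [TopologicalSpace X]

lemma isRegOpen_interior_closure (s : Set X) : IsRegOpen (interior (closure s)) :=
  interior_closure_idem

lemma IsClosed.isRegOpen_interior {C : Set X} (hC : IsClosed C) : IsRegOpen (interior C) :=
  (interior_mono (closure_minimal interior_subset hC)).antisymm
    isOpen_interior.subset_interior_closure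

lemma IsRegOpen.isOpen {V : Set X} (hV : IsRegOpen V) : IsOpen V :=
  hV ▸ isOpen_interior

lemma IsRegOpen.inter {U V : Set X} (hU : IsRegOpen U) (hV : IsRegOpen V) :
    IsRegOpen (U ∩ V) := by
  refine (subset_inter ?_ ?_).antisymm (hU.isOpen.inter hV.isOpen).subset_interior_closure
  · exact (interior_mono (closure_mono inter_subset_left)).trans_eq hU
  · exact (interior_mono (closure_mono inter_subset_right)).trans_eq hV

lemma IsRegOpen.interior_compl {V : Set X} (hV : IsRegOpen V) : IsRegOpen (interior Vᶜ) := by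
  unfold IsRegOpen
  rw [_root_.interior_compl, closure_compl, hV, _root_.interior_compl]

lemma IsRegOpen.isRegClosed_closure {V : Set X} (hV : IsRegOpen V) :
    IsRegClosed (closure V) := by
  unfold IsRegClosed
  rw [hV]

end RegOpen

section AdmissibleClosure

variable {X : Type*} [TopologicalSpace X] (ρ : X → Set X → ℝ)

def admStep (S : Set (Set X)) : Set (Set X) :=
  S ∪ (⋃ q : ℚ, (fun V => interior ((fun x => ρ x (closure V)) ⁻¹' Iic (q : ℝ))) '' S)
    ∪ (⋃ q : ℚ, (fun V => interior ((fun x => ρ x (closure V)) ⁻¹' Ici (q : ℝ))) '' S)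
    ∪ ((fun V => interior Vᶜ) '' S)
    ∪ (image2 (fun U V => U ∩ V) S S)
    ∪ (image2 (fun U V => interior (closure (U ∪ V))) S S)

def admIter (S : Set (Set X)) : ℕ → Set (Set X)
  | 0 => S
  | n + 1 => admStep ρ (admIter S n)

def admClosure (S : Set (Set X)) : Set (Set X) :=
  ⋃ n, admIter ρ S n

variable {ρ} {S : Set (Set X)}

lemma subset_admStep (S : Set (Set X)) : S ⊆ admStep ρ S :=
  fun _ hV => Or.inl (Or.inl (Or.inl (Or.inl (Or.inl hV))))

lemma Set.Countable.admStep (hS : S.Countable) : (admStep ρ S).Countable :=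
  ((((hS.union (countable_iUnion fun _ => hS.image _)).union
    (countable_iUnion fun _ => hS.image _)).union (hS.image _)).union
    (hS.image2 hS _)).union (hS.image2 hS _)

lemma admStep_isRegOpen (hρ : ∀ C, IsRegClosed C → Continuous fun x => ρ x C)
    (hS : ∀ V ∈ S, IsRegOpen V) : ∀ W ∈ admStep ρ S, IsRegOpen W := by
  rintro W (((((hW | hW) | hW) | hW) | hW) | hW)
  · exact hS W hW
  · obtain ⟨q, V, hV, rfl⟩ := mem_iUnion.1 hW
    exact (isClosed_Iic.preimage (hρ _ (hS V hV).isRegClosed_closure)).isRegOpen_interior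
  · obtain ⟨q, V, hV, rfl⟩ := mem_iUnion.1 hW
    exact (isClosed_Ici.preimage (hρ _ (hS V hV).isRegClosed_closure)).isRegOpen_interior
  · obtain ⟨V, hV, rfl⟩ := hW
    exact (hS V hV).interior_compl
  · obtain ⟨U, hU, V, hV, rfl⟩ := hW
    exact (hS U hU).inter (hS V hV)
  · obtain ⟨U, hU, V, hV, rfl⟩ := hW
    exact isRegOpen_interior_closure _

lemma monotone_admIter (S : Set (Set X)) : Monotone (admIter ρ S) :=
  monotone_nat_of_le_succ fun n => subset_admStep (admIter ρ S n)

lemma subset_admClosure (S : Set (Set X)) : S ⊆ admClosure ρ S :=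
  subset_iUnion (admIter ρ S) 0

lemma Set.Countable.admClosure (hS : S.Countable) : (admClosure ρ S).Countable := by
  refine countable_iUnion fun n => ?_
  induction n with
  | zero => exact hS
  | succ n ih => exact ih.admStep

lemma admClosure_isRegOpen (hρ : ∀ C, IsRegClosed C → Continuous fun x => ρ x C)
    (hS : ∀ V ∈ S, IsRegOpen V) : ∀ V ∈ admClosure ρ S, IsRegOpen V := by
  suffices ∀ n, ∀ V ∈ admIter ρ S n, IsRegOpen V from fun V hV =>
    (mem_iUnion.1 hV).elim fun n hn => this n V hn
  intro n
  induction n with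
  | zero => exact hS
  | succ n ih => exact admStep_isRegOpen hρ ih

lemma qAdmissible_admClosure (hρ : ∀ C, IsRegClosed C → Continuous fun x => ρ x C)
    (hS : ∀ V ∈ S, IsRegOpen V) : QAdmissible ρ (admClosure ρ S) := by
  have step : ∀ n, admStep ρ (admIter ρ S n) ⊆ admClosure ρ S :=
    fun n => subset_iUnion (admIter ρ S) (n + 1)
  refine ⟨admClosure_isRegOpen hρ hS, ?_, ?_, ?_⟩
  · intro V hV q
    obtain ⟨n, hn⟩ := mem_iUnion.1 hV
    exact ⟨step n (Or.inl (Or.inl (Or.inl (Or.inl (Or.inr (mem_iUnion.2 ⟨q, V, hn, rfl⟩)))))),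
      step n (Or.inl (Or.inl (Or.inl (Or.inr (mem_iUnion.2 ⟨q, V, hn, rfl⟩)))))⟩
  · intro V hV
    obtain ⟨n, hn⟩ := mem_iUnion.1 hV
    exact step n (Or.inl (Or.inl (Or.inr ⟨V, hn, rfl⟩)))
  · intro U hU V hV
    obtain ⟨m, hm⟩ := mem_iUnion.1 hU
    obtain ⟨n, hn⟩ := mem_iUnion.1 hV
    have hU' := monotone_admIter S (le_max_left m n) hm
    have hV' := monotone_admIter S (le_max_right m n) hn
    exact ⟨step _ (Or.inl (Or.inr (mem_image2_of_mem hU' hV'))),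
      step _ (Or.inr (mem_image2_of_mem hU' hV'))⟩

end AdmissibleClosure

section RatLevelSets

variable {X : Type*} [TopologicalSpace X] {h : X → ℝ}

def ratLevelSets (h : X → ℝ) : Set (Set X) :=
  range (fun q : ℚ => interior (closure (h ⁻¹' Iio (q : ℝ)))) ∪
    range (fun q : ℚ => interior (closure (h ⁻¹' Ioi (q : ℝ))))

lemma countable_ratLevelSets (h : X → ℝ) : (ratLevelSets h).Countable :=
  (countable_range _).union (countable_range _)

lemma isRegOpen_of_mem_ratLevelSets {V : Set X} (hV : V ∈ ratLevelSets h) : IsRegOpen V := by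
  rcases hV with ⟨q, rfl⟩ | ⟨q, rfl⟩ <;> exact isRegOpen_interior_closure _

lemma interior_closure_preimage_Iio_subset (hh : Continuous h) (a : ℝ) :
    interior (closure (h ⁻¹' Iio a)) ⊆ h ⁻¹' Iic a :=
  interior_subset.trans (closure_minimal (preimage_mono Iio_subset_Iic_self)
    (isClosed_Iic.preimage hh))

lemma interior_closure_preimage_Ioi_subset (hh : Continuous h) (a : ℝ) :
    interior (closure (h ⁻¹' Ioi a)) ⊆ h ⁻¹' Ici a :=
  interior_subset.trans (closure_minimal (preimage_mono Ioi_subset_Ici_self)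
    (isClosed_Ici.preimage hh))

lemma iUnion_interior_closure_preimage_Iio (hh : Continuous h) (a : ℝ) :
    ⋃ q : {q : ℚ // (q : ℝ) < a}, interior (closure (h ⁻¹' Iio (q : ℝ))) = h ⁻¹' Iio a := by
  refine subset_antisymm (iUnion_subset fun q => ?_) fun x hx => ?_
  · exact (interior_closure_preimage_Iio_subset hh q).trans
      (preimage_mono (Iic_subset_Iio.2 q.2))
  · obtain ⟨q, hxq, hqa⟩ := exists_rat_btwn (show h x < a from hx)
    exact mem_iUnion.2 ⟨⟨q, hqa⟩, (isOpen_Iio.preimage hh).subset_interior_closure hxq⟩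

lemma iUnion_interior_closure_preimage_Ioi (hh : Continuous h) (a : ℝ) :
    ⋃ q : {q : ℚ // a < (q : ℝ)}, interior (closure (h ⁻¹' Ioi (q : ℝ))) = h ⁻¹' Ioi a := by
  refine subset_antisymm (iUnion_subset fun q => ?_) fun x hx => ?_
  · exact (interior_closure_preimage_Ioi_subset hh q).trans
      (preimage_mono (Ici_subset_Ioi.2 q.2))
  · obtain ⟨q, haq, hqx⟩ := exists_rat_btwn (show a < h x from hx)
    exact mem_iUnion.2 ⟨⟨q, haq⟩, (isOpen_Ioi.preimage hh).subset_interior_closure hqx⟩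

end RatLevelSets

lemma qP_surjective {X : Type*} (P : Set (Set X)) : Function.Surjective (qP P) :=
  Quotient.mk_surjective

section Quotient

variable {X : Type*} [TopologicalSpace X] {P : Set (Set X)} {h : X → ℝ}

lemma isOpen_image_qP {V : Set X} (hV : V ∈ P) : IsOpen[topXP P] (qP P '' V) :=
  TopologicalSpace.isOpen_generateFrom_of_mem ⟨V, hV, rfl⟩

lemma le_of_pSetoid_rel (hh : Continuous h) (hP : ratLevelSets h ⊆ P) {a b : X}
    (hab : pSetoid P a b) : h a ≤ h b := by
  by_contra! hba
  obtain ⟨q, hbq, hqa⟩ := exists_rat_btwn hba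
  have hU : interior (closure (h ⁻¹' Iio (q : ℝ))) ∈ P := hP (Or.inl ⟨q, rfl⟩)
  have hb := (isOpen_Iio.preimage hh).subset_interior_closure hbq
  exact (interior_closure_preimage_Iio_subset hh q ((hab _ hU).2 hb)).not_gt hqa

lemma exists_continuous_comp_qP_eq (hh : Continuous h) (hP : ratLevelSets h ⊆ P) :
    ∃ g : XP P → ℝ, @Continuous _ _ (topXP P) _ g ∧ ∀ x, g (qP P x) = h x := by
  let := topXP P
  let g : XP P → ℝ := Quotient.lift h fun a b hab =>
    (le_of_pSetoid_rel hh hP hab).antisymm (le_of_pSetoid_rel hh hP ((pSetoid P).symm hab))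
  have preimage_eq (t : Set ℝ) : g ⁻¹' t = qP P '' (h ⁻¹' t) :=
    (image_preimage_eq (g ⁻¹' t) (qP_surjective P)).symm
  refine ⟨g, ?_, fun _ => rfl⟩
  rw [OrderTopology.topology_eq_generate_intervals (α := ℝ)]
  refine continuous_generateFrom_iff.2 ?_
  rintro s ⟨a, rfl | rfl⟩
  · rw [preimage_eq, ← iUnion_interior_closure_preimage_Ioi hh, image_iUnion]
    exact isOpen_iUnion fun q => isOpen_image_qP (hP (Or.inr ⟨q, rfl⟩))
  · rw [preimage_eq, ← iUnion_interior_closure_preimage_Iio hh, image_iUnion]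
    exact isOpen_iUnion fun q => isOpen_image_qP (hP (Or.inl ⟨q, rfl⟩))

end Quotient

theorem stmt13_general {X : Type*} [TopologicalSpace X]
    (ρ : X → Set X → ℝ) (hρ : IsCountKappaMetric ρ)
    (P : Set (Set X)) (hP : QAdmissible ρ P) (hPc : P.Countable)
    (h : X → ℝ) (hh : Continuous h) (hrange : ∀ x, h x ∈ Set.Icc (0 : ℝ) 1) :
    ∃ P' : Set (Set X), P ⊆ P' ∧ P'.Countable ∧ QAdmissible ρ P' ∧
      ∃ g : XP P' → ℝ, @Continuous _ _ (topXP P') _ g ∧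
        (∀ z, g z ∈ Set.Icc (0 : ℝ) 1) ∧ ∀ x, h x = g (qP P' x) := by
  have hgen : P ∪ ratLevelSets h ⊆ admClosure ρ (P ∪ ratLevelSets h) := subset_admClosure _
  have hreg : ∀ V ∈ P ∪ ratLevelSets h, IsRegOpen V := by
    rintro V (hV | hV)
    exacts [hP.1 V hV, isRegOpen_of_mem_ratLevelSets hV]
  obtain ⟨g, hg, hgh⟩ := exists_continuous_comp_qP_eq hh (subset_union_right.trans hgen)
  refine ⟨_, subset_union_left.trans hgen, (hPc.union (countable_ratLevelSets h)).admClosure,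
    qAdmissible_admClosure hρ.k3 hreg, g, hg, fun z => ?_, fun x => (hgh x).symm⟩
  obtain ⟨x, rfl⟩ := qP_surjective _ z
  rw [hgh]
  exact hrange x

/-- every continuous h : X → [0,1] factors through some quotient
X_{P'} for a countable Q-admissible P' ⊇ P. -/
theorem stmt13 {X : Type*} [TopologicalSpace X] (hpc : Pseudocompact X)
    (ρ : X → Set X → ℝ) (hρ : IsCountKappaMetric ρ)
    (P : Set (Set X)) (hP : QAdmissible ρ P) (hPc : P.Countable)
    (huniv : Set.univ ∈ P)
    (h : X → ℝ) (hh : Continuous h) (hrange : ∀ x, h x ∈ Set.Icc (0 : ℝ) 1) :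
    ∃ P' : Set (Set X), P ⊆ P' ∧ P'.Countable ∧ QAdmissible ρ P' ∧
      ∃ g : XP P' → ℝ, @Continuous _ _ (topXP P') _ g ∧
        (∀ z, g z ∈ Set.Icc (0 : ℝ) 1) ∧ ∀ x, h x = g (qP P' x) :=
  stmt13_general ρ hρ P hP hPc h hh hrange
end

section
/- Every pseudocompact countably κ-metrizable space satisfies the countable chain condition. In particular, the ordinal space ω₁ with the order topology is not countably κ-metrizable. -/
open Set Topology

section Helpers

open Function

variable {X : Type*} [TopologicalSpace X]

lemma regClosed_closure {W : Set X} (hW : IsOpen W) : IsRegClosed (closure W) := by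
  refine le_antisymm (closure_minimal interior_subset isClosed_closure) (closure_mono ?_)
  exact hW.subset_interior_iff.mpr subset_closure

lemma open_inter_closure_empty {U S : Set X} (hU : IsOpen U) (h : U ∩ S = ∅) :
    U ∩ closure S = ∅ := by
  have h2 := hU.inter_closure (t := S)
  rw [h, closure_empty] at h2
  exact subset_empty_iff.mp h2

lemma rho_pos {ρ : X → Set X → ℝ} (hρ : IsCountKappaMetric ρ) {x : X} {C : Set X}
    (hC : IsRegClosed C) (hx : x ∉ C) : 0 < ρ x C := by
  rcases lt_or_eq_of_le (hρ.nonneg x C hC) with h | h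
  · exact h
  · exact absurd ((hρ.k1 x C hC).mp h.symm) hx

/-- From pseudocompactness (with a countable κ-metric providing bump functions):
every sequence of nonempty open sets has a "cluster point". -/
lemma exists_cluster_point {ρ : X → Set X → ℝ} (hρ : IsCountKappaMetric ρ)
    (hpc : Pseudocompact X) (V : ℕ → Set X) (hop : ∀ n, IsOpen (V n))
    (hne : ∀ n, (V n).Nonempty) :
    ∃ y : X, ∀ W : Set X, IsOpen W → y ∈ W → {n | (W ∩ V n).Nonempty}.Infinite := by
  by_contra hcon
  push_neg at hcon
  choose W hWopen hWmem hWfin using hcon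
  choose p hp using hne
  set D : ℕ → Set X := fun n => closure (interior (V n)ᶜ) with hD
  have hDreg : ∀ n, IsRegClosed (D n) := fun n => regClosed_closure isOpen_interior
  have hpD : ∀ n, 0 < ρ (p n) (D n) := by
    intro n
    refine rho_pos hρ (hDreg n) ?_
    intro hmem
    have hdis : V n ∩ D n = ∅ :=
      open_inter_closure_empty (hop n)
        (subset_empty_iff.mp fun x hx => (interior_subset hx.2) hx.1)
    exact absurd (mem_inter (hp n) hmem) (by rw [hdis]; exact notMem_empty _)
  set f : ℕ → X → ℝ := fun n x => ((n : ℝ) / ρ (p n) (D n)) * ρ x (D n) with hf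
  have hfc : ∀ n, Continuous (f n) := fun n => continuous_const.mul (hρ.k3 (D n) (hDreg n))
  have hfnn : ∀ n x, 0 ≤ f n x := fun n x =>
    mul_nonneg (div_nonneg (Nat.cast_nonneg n) (hpD n).le) (hρ.nonneg _ _ (hDreg n))
  have hsupp : ∀ n, support (f n) ⊆ closure (V n) := by
    intro n x hx
    by_contra hxc
    apply hx
    have hxD : x ∈ D n := by
      apply subset_closure
      rw [mem_interior_iff_mem_nhds]
      exact Filter.mem_of_superset
        ((isOpen_compl_iff.mpr isClosed_closure).mem_nhds hxc)
        (compl_subset_compl.mpr subset_closure)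
    have : ρ x (D n) = 0 := (hρ.k1 x (D n) (hDreg n)).mpr hxD
    simp [hf, this]
  -- key finiteness: in W x, only finitely many supports are met
  have hmeet : ∀ x n, (support (f n) ∩ W x).Nonempty → (W x ∩ V n).Nonempty := by
    intro x n ⟨z, hz1, hz2⟩
    have : z ∈ W x ∩ closure (V n) := ⟨hz2, hsupp n hz1⟩
    have h2 := (hWopen x).inter_closure (t := V n) this
    exact closure_nonempty_iff.mp ⟨z, h2⟩
  have hlf : LocallyFinite fun n => support (f n) := by
    intro x
    exact ⟨W x, (hWopen x).mem_nhds (hWmem x),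
      ((hWfin x).subset (fun n hn => hmeet x n hn))⟩
  have hF : Continuous fun x => ∑ᶠ n, f n x := continuous_finsum hfc hlf
  obtain ⟨M, hM⟩ := hpc _ hF
  obtain ⟨m, hm⟩ := exists_nat_gt M
  -- evaluate at p m
  have hfinsupp : (support fun n => f n (p m)).Finite := by
    obtain ⟨U, hU, hfin⟩ := hlf (p m)
    refine hfin.subset ?_
    intro n hn
    exact ⟨p m, hn, mem_of_mem_nhds hU⟩
  have hle : f m (p m) ≤ ∑ᶠ n, f n (p m) :=
    single_le_finsum m hfinsupp (fun j => hfnn j (p m))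
  have hval : f m (p m) = (m : ℝ) := by
    simp only [hf]
    rw [div_mul_eq_mul_div, mul_div_assoc, div_self (hpD m).ne', mul_one]
  have := hM (p m)
  have h2 : (m : ℝ) ≤ ∑ᶠ n, f n (p m) := hval ▸ hle
  have h3 : ∑ᶠ n, f n (p m) ≤ M := (le_abs_self _).trans this
  linarith

end Helpers

section Main

variable {X : Type*} [TopologicalSpace X]

theorem ccc_of_pseudocompact (hpc : Pseudocompact X)
    (hex : ∃ ρ : X → Set X → ℝ, IsCountKappaMetric ρ) : CCCSpace X := by
  classical
  obtain ⟨ρ, hρ⟩ := hex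
  intro 𝒪 hop hdisj
  by_contra hunc
  -- choose a point in each member
  have hx : ∀ U ∈ 𝒪, ∃ x, x ∈ U := fun U hU => (hop U hU).2
  have h𝒪ne : 𝒪.Nonempty := by
    rcases Set.eq_empty_or_nonempty 𝒪 with h | h
    · exact absurd (h ▸ Set.countable_empty) hunc
    · exact h
  haveI hXne : Nonempty X := ⟨(hx h𝒪ne.choose h𝒪ne.choose_spec).choose⟩
  choose! pt hpt using hx
  -- a well-order on Set X
  set σ : Set X → Set X → Prop := WellOrderingRel with hσdef
  haveI hwo : IsWellOrder (Set X) σ := WellOrderingRel.isWellOrder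
  have hwf : WellFounded σ := hwo.toIsWellFounded.wf
  set O : Set X → Set X := fun U => ⋃₀ {V | V ∈ 𝒪 ∧ σ V U} with hOdef
  set C : Set X → Set X := fun U => closure (O U) with hCdef
  have hOopen : ∀ U, IsOpen (O U) := fun U => isOpen_sUnion (fun V hV => (hop V hV.1).1)
  have hCreg : ∀ U, IsRegClosed (C U) := fun U => regClosed_closure (hOopen U)
  -- each chosen point is far from earlier sets
  have hpos : ∀ U ∈ 𝒪, 0 < ρ (pt U) (C U) := by
    intro U hU
    refine rho_pos hρ (hCreg U) ?_
    intro hmem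
    have hdisO : U ∩ O U = ∅ := by
      refine subset_empty_iff.mp ?_
      rintro x ⟨hxU, hxO⟩
      obtain ⟨V, ⟨hV𝒪, hVU⟩, hxV⟩ := hxO
      have hVne : V ≠ U := fun h => absurd (h ▸ hVU) (irrefl U)
      have := hdisj hV𝒪 hU hVne
      exact (Set.disjoint_left.mp this) hxV hxU
    have hdisC : U ∩ C U = ∅ := open_inter_closure_empty (hop U hU).1 hdisO
    exact absurd (mem_inter (hpt U hU) hmem)
      (by rw [hdisC]; exact notMem_empty _)
  -- pigeonhole: some 1/(k+1) works for uncountably many U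
  obtain ⟨k, hk⟩ : ∃ k : ℕ, ¬ ({U | U ∈ 𝒪 ∧ 1 / ((k : ℝ) + 1) < ρ (pt U) (C U)}).Countable := by
    by_contra hall
    push_neg at hall
    apply hunc
    have hcov : 𝒪 ⊆ ⋃ k : ℕ, {U | U ∈ 𝒪 ∧ 1 / ((k : ℝ) + 1) < ρ (pt U) (C U)} := by
      intro U hU
      have h0 := hpos U hU
      obtain ⟨k, hk⟩ := exists_nat_gt (1 / ρ (pt U) (C U))
      refine mem_iUnion.mpr ⟨k, hU, ?_⟩
      rw [div_lt_iff₀ (by positivity)]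
      have h1 : (1 : ℝ) < (k : ℝ) * ρ (pt U) (C U) := (div_lt_iff₀ h0).mp hk
      nlinarith
    exact Set.Countable.mono hcov (countable_iUnion hall)
  set ε : ℝ := 1 / ((k : ℝ) + 1) with hεdef
  have hεpos : 0 < ε := by positivity
  set S : Set (Set X) := {U | U ∈ 𝒪 ∧ ε < ρ (pt U) (C U)} with hSdef
  have hS : S.Infinite := fun hfin => hk hfin.countable
  -- construct a strictly σ-increasing sequence in S
  set pick : Finset (Set X) → Set X :=
    fun F => hwf.min (S \ ↑F) ((hS.diff F.finite_toSet).nonempty) with hpickdef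
  set g : ℕ → Finset (Set X) := fun n => Nat.rec ∅ (fun _ F => insert (pick F) F) n with hgdef
  set a : ℕ → Set X := fun n => pick (g n) with hadef
  have hamem : ∀ n, a n ∈ S \ ↑(g n) := fun n => hwf.min_mem _ _
  have hgsucc : ∀ n, g (n + 1) = insert (a n) (g n) := fun n => rfl
  have hgstep : ∀ n, g n ⊆ g (n + 1) := by
    intro n
    rw [hgsucc]
    exact Finset.subset_insert _ _
  have hgmono : ∀ m n, m ≤ n → g m ⊆ g n := fun m n h =>
    monotone_nat_of_le_succ (f := g) (fun n => hgstep n) h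
  have haing : ∀ m n, m < n → a m ∈ g n := by
    intro m n hmn
    have h1 : a m ∈ g (m + 1) := by rw [hgsucc]; exact Finset.mem_insert_self _ _
    exact hgmono (m + 1) n hmn h1
  have hσa : ∀ m n, m < n → σ (a m) (a n) := by
    intro m n hmn
    have hne : a n ≠ a m := by
      intro h
      exact (hamem n).2 (h ▸ haing m n hmn)
    have hnot : ¬ σ (a n) (a m) := by
      have h1 : a n ∈ S \ ↑(g m) := by
        refine ⟨(hamem n).1, fun h => (hamem n).2 (hgmono m n hmn.le h)⟩
      exact hwf.not_lt_min (S \ ↑(g m)) h1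
    rcases trichotomous_of σ (a m) (a n) with h | h | h
    · exact h
    · exact absurd h.symm hne
    · exact absurd h hnot
  have haS : ∀ n, a n ∈ S := fun n => (hamem n).1
  -- monotonicity of the chain C (a n)
  have hCmono : ∀ m n, m ≤ n → C (a m) ⊆ C (a n) := by
    intro m n hmn
    rcases eq_or_lt_of_le hmn with h | h
    · rw [h]
    · apply closure_mono
      apply sUnion_subset_sUnion
      rintro V ⟨hV𝒪, hVm⟩
      exact ⟨hV𝒪, Trans.trans hVm (hσa m n h)⟩
  have hsubC : ∀ n, a n ⊆ C (a (n + 1)) := by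
    intro n
    refine subset_trans ?_ subset_closure
    exact subset_sUnion_of_mem ⟨haS n |>.1, hσa n (n + 1) (Nat.lt_succ_self n)⟩
  -- the shrunken open sets
  set V : ℕ → Set X := fun n => a n ∩ {x | ε < ρ x (C (a n))} with hVdef
  have hVopen : ∀ n, IsOpen (V n) := by
    intro n
    refine ((hop _ (haS n).1).1).inter ?_
    exact isOpen_Ioi.preimage (hρ.k3 _ (hCreg (a n)))
  have hVne : ∀ n, (V n).Nonempty :=
    fun n => ⟨pt (a n), hpt _ (haS n).1, (haS n).2⟩
  -- cluster point
  obtain ⟨y, hy⟩ := exists_cluster_point hρ hpc V hVopen hVne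
  -- y is in the closure of every tail union
  have hytail : ∀ N, y ∈ closure (⋃ n, V (n + N)) := by
    intro N
    rw [mem_closure_iff]
    intro W hW hyW
    obtain ⟨b, hb, hNb⟩ := Set.Infinite.exists_gt (hy W hW hyW) N
    obtain ⟨z, hz⟩ := hb
    exact ⟨z, hz.1, mem_iUnion.mpr ⟨b - N, by rw [Nat.sub_add_cancel hNb.le]; exact hz.2⟩⟩
  -- hence ρ y (C (a N)) ≥ ε for every N
  have hyge : ∀ N, ε ≤ ρ y (C (a N)) := by
    intro N
    have hcl : IsClosed {x | ε ≤ ρ x (C (a N))} :=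
      isClosed_Ici.preimage (hρ.k3 _ (hCreg (a N)))
    have hsub : (⋃ n, V (n + N)) ⊆ {x | ε ≤ ρ x (C (a N))} := by
      rintro x hx
      obtain ⟨n, hn⟩ := mem_iUnion.mp hx
      have h1 : ε < ρ x (C (a (n + N))) := hn.2
      have h2 : ρ x (C (a (n + N))) ≤ ρ x (C (a N)) :=
        hρ.k2 x _ _ (hCreg _) (hCreg _) (hCmono N (n + N) (Nat.le_add_left N n))
      exact le_of_lt (lt_of_lt_of_le h1 h2)
    exact closure_minimal hsub hcl (hytail N)
  -- y is in the closure of the union of the chain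
  have hymem : y ∈ closure (⋃ n, C (a n)) := by
    refine closure_mono ?_ (hytail 0)
    refine iUnion_subset fun n => ?_
    refine subset_trans (fun x hx => hx.1) ?_
    refine subset_trans (hsubC (n + 0)) ?_
    exact subset_iUnion (fun m => C (a m)) (n + 0 + 1)
  -- the closure of the union of the chain is regular closed
  have hregU : IsRegClosed (closure (⋃ n, C (a n))) := by
    have heq : closure (⋃ n, C (a n)) = closure (⋃ n, O (a n)) := by
      apply le_antisymm
      · refine closure_minimal ?_ isClosed_closure
        refine iUnion_subset fun n => ?_
        exact closure_mono (subset_iUnion (fun m => O (a m)) n)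
      · exact closure_mono (iUnion_subset fun n =>
          subset_trans subset_closure (subset_iUnion (fun m => C (a m)) n))
    rw [heq]
    exact regClosed_closure (isOpen_iUnion fun n => hOopen (a n))
  -- contradiction via (K4ω)
  have hk4 := hρ.k4omega (fun n => C (a n)) (fun n => hCreg (a n))
    (fun n => hCmono n (n + 1) (Nat.le_succ n)) y
  have h0 : ρ y (closure (⋃ n, C (a n))) = 0 :=
    (hρ.k1 y _ hregU).mpr hymem
  have hινf : ε ≤ ⨅ n, ρ y (C (a n)) := le_ciInf hyge
  rw [hk4] at h0
  rw [h0] at hινf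
  exact absurd hινf (not_le.mpr hεpos)

end Main

/-- The ordinal space ω₁ with the order topology. -/
def Omega1 : Type 1 := {o : Ordinal // o < (Cardinal.aleph 1).ord}

noncomputable instance : LinearOrder Omega1 :=
  inferInstanceAs (LinearOrder {o : Ordinal // o < (Cardinal.aleph 1).ord})

noncomputable instance : TopologicalSpace Omega1 := Preorder.topology Omega1

instance : OrderTopology Omega1 := ⟨rfl⟩

namespace Omega1Facts

lemma aleph1_limit : Order.IsSuccLimit ((Cardinal.aleph 1).ord) :=
  Cardinal.isSuccLimit_ord (le_of_lt Cardinal.aleph0_lt_aleph_one)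

/-- successor inside Omega1 -/
noncomputable def osucc (o : Omega1) : Omega1 :=
  ⟨o.val + 1, aleph1_limit.succ_lt o.property⟩

lemma lt_osucc (o : Omega1) : o < osucc o := by
  show o.val < o.val + 1
  rw [Ordinal.add_one_eq_succ]
  exact Order.lt_succ _

lemma osucc_injective : Function.Injective osucc := by
  intro o o' h
  have h1 : o.val + 1 = o'.val + 1 := congrArg Subtype.val h
  rw [Ordinal.add_one_eq_succ, Ordinal.add_one_eq_succ] at h1
  exact Subtype.ext (Order.succ_injective h1)

lemma singleton_osucc_open (o : Omega1) : IsOpen ({osucc o} : Set Omega1) := by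
  have heq : ({osucc o} : Set Omega1) = Set.Ioi o ∩ Set.Iio (osucc (osucc o)) := by
    ext x
    simp only [Set.mem_singleton_iff, Set.mem_inter_iff, Set.mem_Ioi, Set.mem_Iio]
    constructor
    · rintro rfl
      exact ⟨lt_osucc o, lt_osucc _⟩
    · rintro ⟨h1, h2⟩
      have hv1 : o.val < x.val := h1
      have hv2 : x.val < o.val + 1 + 1 := h2
      apply Subtype.ext
      show x.val = o.val + 1
      rw [Ordinal.add_one_eq_succ]
      rw [Ordinal.add_one_eq_succ, Ordinal.add_one_eq_succ, Order.lt_succ_iff] at hv2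
      exact le_antisymm hv2 (Order.succ_le_of_lt hv1)
  rw [heq]
  exact isOpen_Ioi.inter isOpen_Iio

lemma uncountable_omega1 : ¬ Countable Omega1 := by
  intro h
  have he : Omega1 ≃ ↑(Set.Iio ((Cardinal.aleph 1).ord)) :=
    Equiv.subtypeEquivRight (fun _ => Iff.rfl)
  have h1 : Cardinal.mk ↑(Set.Iio ((Cardinal.aleph 1).ord)) =
      Cardinal.lift.{1} ((Cardinal.aleph 1).ord).card := Ordinal.mk_Iio_ordinal _
  rw [Cardinal.card_ord] at h1
  have h2 : Cardinal.mk Omega1 ≤ Cardinal.aleph0 := Cardinal.mk_le_aleph0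
  rw [Cardinal.mk_congr he, h1] at h2
  rw [← Cardinal.lift_aleph0.{1, 0}, Cardinal.lift_le] at h2
  exact absurd h2 (not_le.mpr Cardinal.aleph0_lt_aleph_one)

lemma not_ccc : ¬ CCCSpace Omega1 := by
  intro hccc
  have h := hccc (Set.range (fun o : Omega1 => ({osucc o} : Set Omega1)))
    (by
      rintro U ⟨o, rfl⟩
      exact ⟨singleton_osucc_open o, Set.singleton_nonempty _⟩)
    (by
      rintro U ⟨o, rfl⟩ V ⟨o', rfl⟩ hne
      have hd : osucc o ≠ osucc o' := fun h => hne (by rw [osucc_injective h])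
      exact Set.disjoint_singleton.mpr hd)
  -- range of singletons countable implies Omega1 countable
  apply uncountable_omega1
  have hinj : Function.Injective (fun o : Omega1 => ({osucc o} : Set Omega1)) := by
    intro o o' hoo
    exact osucc_injective (Set.singleton_eq_singleton_iff.mp hoo)
  haveI := h.to_subtype
  exact Countable.of_equiv _ (Equiv.ofInjective _ hinj).symm

/-- every monotone ℕ-sequence in Omega1 has a least upper bound -/
lemma exists_isLUB (y : ℕ → Omega1) : ∃ ℓ : Omega1, IsLUB (Set.range y) ℓ := by
  have hlt : ∀ n, (y n).val < (Cardinal.aleph 1).ord := fun n => (y n).property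
  have hsup : (⨆ n, (y n).val) < (Cardinal.aleph 1).ord := by
    apply Ordinal.iSup_lt_ord _ hlt
    rw [Cardinal.isRegular_aleph_one.cof_eq, Cardinal.mk_nat]
    exact Cardinal.aleph0_lt_aleph_one
  refine ⟨⟨_, hsup⟩, ?_, ?_⟩
  · rintro b ⟨n, rfl⟩
    show (y n).val ≤ _
    exact le_ciSup (Ordinal.bddAbove_range _) n
  · rintro b hb
    show (⨆ n, (y n).val) ≤ b.val
    exact ciSup_le fun n => hb ⟨n, rfl⟩

lemma pseudocompact_omega1 : Pseudocompact Omega1 := by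
  intro f hf
  by_contra hcon
  push_neg at hcon
  choose x hx using fun n : ℕ => hcon n
  obtain ⟨g, hg | hg⟩ := exists_increasing_or_nonincreasing_subseq
    ((· ≤ ·) : Omega1 → Omega1 → Prop) x
  · -- monotone subsequence
    set y : ℕ → Omega1 := fun n => x (g n) with hydef
    have hmono : Monotone y := by
      intro m n hmn
      rcases eq_or_lt_of_le hmn with h | h
      · rw [h]
      · exact hg m n h
    obtain ⟨ℓ, hℓ⟩ := exists_isLUB y
    have htd : Filter.Tendsto y Filter.atTop (nhds ℓ) := tendsto_atTop_isLUB hmono hℓ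
    have htf : Filter.Tendsto (fun n => f (y n)) Filter.atTop (nhds (f ℓ)) :=
      ((hf.tendsto ℓ).comp htd)
    obtain ⟨n₀, hn₀⟩ := (Metric.tendsto_atTop.mp htf) 1 one_pos
    obtain ⟨m, hm⟩ := exists_nat_gt (|f ℓ| + 1)
    set n : ℕ := max n₀ m with hndef
    have h1 : |f (y n) - f ℓ| < 1 := by
      have := hn₀ n (le_max_left _ _)
      rwa [Real.dist_eq] at this
    have h2 : (g n : ℝ) < |f (y n)| := hx (g n)
    have h3 : (n : ℝ) ≤ (g n) := by
      exact_mod_cast (OrderEmbedding.strictMono g).le_apply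
    have h4 : (m : ℝ) ≤ n := by exact_mod_cast le_max_right n₀ m
    have h5 : |f (y n)| ≤ |f ℓ| + 1 := by
      calc |f (y n)| = |f ℓ + (f (y n) - f ℓ)| := by ring_nf
        _ ≤ |f ℓ| + |f (y n) - f ℓ| := abs_add_le _ _
        _ ≤ |f ℓ| + 1 := by linarith
    linarith
  · -- strictly decreasing subsequence: contradicts well-foundedness
    haveI : WellFoundedLT Omega1 := by
      have hsm : StrictMono (fun o : Omega1 => o.val) := fun _ _ h => h
      exact hsm.wellFoundedLT
    have hdec : ∀ n, (fun n => x (g n)) (n + 1) < (fun n => x (g n)) n :=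
      fun n => not_le.mp (hg n (n + 1) (Nat.lt_succ_self n))
    exact RelEmbedding.not_wellFounded
      (RelEmbedding.natGT _ hdec) (IsWellFounded.wf)

end Omega1Facts


/-- every pseudocompact countably κ-metrizable space is ccc; in
particular ω₁ is not countably κ-metrizable. -/
theorem stmt14 :
    (∀ (X : Type*) [TopologicalSpace X], Pseudocompact X →
      (∃ ρ : X → Set X → ℝ, IsCountKappaMetric ρ) → CCCSpace X) ∧
    ¬ ∃ ρ : Omega1 → Set Omega1 → ℝ, IsCountKappaMetric ρ := by
  constructor
  · intro X _ hpc hex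
    exact ccc_of_pseudocompact hpc hex
  · intro hex
    exact Omega1Facts.not_ccc
      (ccc_of_pseudocompact Omega1Facts.pseudocompact_omega1 hex)
end

section
/- Let X be a pseudocompact countably κ-metrizable space with countable κ-metric ρ, and for each F' ∈ RC(βX) let ρ̄(·, F'∩X) : βX → [0,∞) be the continuous extension of the bounded continuous function ρ(·, F'∩X) : X → [0,∞). Then for all p ∈ βX and F' ∈ RC(βX): ρ̄(p, F'∩X) = 0 if and only if p ∈ F'. -/
open Set Topology

section AuxProofs

variable {X : Type*} [TopologicalSpace X]

lemma regClosed_subset_closure_image (F' : Set (StoneCech X)) (hF' : IsRegClosed F') :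
    F' ⊆ closure (stoneCechUnit '' (stoneCechUnit ⁻¹' (interior F') : Set X)) := by
  have hd : Dense (Set.range (stoneCechUnit : X → StoneCech X)) := denseRange_stoneCechUnit
  have h1 : interior F' ⊆ closure (interior F' ∩ Set.range (stoneCechUnit : X → StoneCech X)) :=
    hd.open_subset_closure_inter isOpen_interior
  have himg : stoneCechUnit '' (stoneCechUnit ⁻¹' (interior F') : Set X) =
      interior F' ∩ Set.range (stoneCechUnit : X → StoneCech X) := by
    rw [Set.image_preimage_eq_inter_range, Set.inter_comm]
  rw [himg]
  calc F' = closure (interior F') := hF'.symm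
    _ ⊆ closure (closure (interior F' ∩ Set.range (stoneCechUnit : X → StoneCech X))) :=
        closure_mono h1
    _ = _ := closure_closure

lemma regClosed_preimage [T35Space X] (F' : Set (StoneCech X)) (hF' : IsRegClosed F') :
    IsRegClosed (stoneCechUnit ⁻¹' F' : Set X) := by
  have hF'c : IsClosed F' := hF' ▸ isClosed_closure
  have hFc : IsClosed (stoneCechUnit ⁻¹' F' : Set X) := hF'c.preimage continuous_stoneCechUnit
  apply subset_antisymm (closure_minimal interior_subset hFc)
  intro x hx
  set A : Set X := stoneCechUnit ⁻¹' (interior F') with hA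
  have hAopen : IsOpen A := isOpen_interior.preimage continuous_stoneCechUnit
  have hAF : A ⊆ stoneCechUnit ⁻¹' F' := fun a ha => Set.preimage_mono interior_subset ha
  have hAint : A ⊆ interior (stoneCechUnit ⁻¹' F') := interior_maximal hAF hAopen
  suffices h : x ∈ closure A from closure_mono hAint h
  by_contra hxA
  obtain ⟨f, fc, fx, fA⟩ := CompletelyRegularSpace.completely_regular x (closure A)
    isClosed_closure hxA
  have hge : ∀ a : X, stoneCechExtend fc (stoneCechUnit a) = f a := fun a =>
    congrFun (stoneCechExtend_extends fc) a
  have hcl : IsClosed {q : StoneCech X | stoneCechExtend fc q = 1} :=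
    isClosed_eq (continuous_stoneCechExtend fc) continuous_const
  have himg : (stoneCechUnit '' A : Set (StoneCech X)) ⊆
      {q : StoneCech X | stoneCechExtend fc q = 1} := by
    rintro _ ⟨a, ha, rfl⟩
    show stoneCechExtend fc (stoneCechUnit a) = 1
    rw [hge a]
    exact fA (subset_closure ha)
  have h1 : stoneCechExtend fc (stoneCechUnit x) = 1 :=
    closure_minimal himg hcl (regClosed_subset_closure_image F' hF' hx)
  rw [hge x, fx] at h1
  exact zero_ne_one h1

lemma exists_unit_mem_iInter {X : Type*} [TopologicalSpace X] [T35Space X]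
    (hpc : Pseudocompact X) (U : ℕ → Set (StoneCech X)) (hUo : ∀ n, IsOpen (U n))
    (p : StoneCech X) (hp : ∀ n, p ∈ U n) : ∃ x : X, ∀ n, stoneCechUnit x ∈ U n := by
  haveI : Nonempty (StoneCech X) := ⟨p⟩
  have hneX : Nonempty X := by
    by_contra hX
    rw [not_nonempty_iff] at hX
    have hd : Dense (Set.range (stoneCechUnit : X → StoneCech X)) := denseRange_stoneCechUnit
    rw [Set.range_eq_empty] at hd
    exact Set.not_nonempty_empty hd.nonempty
  -- bump functions
  have hg : ∀ n, ∃ g : StoneCech X → ℝ, Continuous g ∧ g p = 1 ∧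
      (∀ q, q ∉ U n → g q = 0) ∧ ∀ q, g q ∈ Set.Icc (0:ℝ) 1 := by
    intro n
    have hdisj : Disjoint ({p} : Set (StoneCech X)) (U n)ᶜ := by
      rw [Set.disjoint_left]
      rintro q rfl
      exact fun hq => hq (hp n)
    obtain ⟨f, f0, f1, fI⟩ := exists_continuous_zero_one_of_isClosed
      isClosed_singleton (hUo n).isClosed_compl hdisj
    refine ⟨fun q => 1 - f q, continuous_const.sub f.continuous, ?_, ?_, ?_⟩
    · have h0 : f p = 0 := f0 rfl
      show 1 - f p = 1
      rw [h0]; ring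
    · intro q hq
      have h1 : f q = 1 := f1 hq
      show 1 - f q = 0
      rw [h1]; ring
    · intro q
      obtain ⟨h1, h2⟩ := fI q
      constructor
      · show (0:ℝ) ≤ 1 - f q; linarith
      · show 1 - f q ≤ 1; linarith
  choose g gc gp g0 gI using hg
  set w : ℕ → ℝ := fun n => (1/2 : ℝ) ^ (n + 1) with hwdef
  have hwpos : ∀ n, 0 < w n := fun n => by positivity
  have hweq : w = fun n => (1/2 : ℝ) * (1/2) ^ n := by funext n; rw [hwdef]; ring
  have hw : Summable w := by
    rw [hweq]
    exact (summable_geometric_of_lt_one (by norm_num) (by norm_num)).mul_left _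
  have hwsum : ∑' n, w n = 1 := by
    rw [hweq, tsum_mul_left, tsum_geometric_of_lt_one (by norm_num) (by norm_num)]
    norm_num
  set f : StoneCech X → ℝ := fun q => ∑' n, w n * g n q with hfdef
  have hterm_le : ∀ n q, w n * g n q ≤ w n := fun n q => by
    have := (gI n q).2
    nlinarith [(hwpos n).le]
  have hterm_nonneg : ∀ n q, 0 ≤ w n * g n q := fun n q =>
    mul_nonneg (hwpos n).le (gI n q).1
  have hfa : ∀ q, Summable (fun n => w n * g n q) := fun q =>
    Summable.of_nonneg_of_le (fun n => hterm_nonneg n q) (fun n => hterm_le n q) hw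
  have hfc : Continuous f := by
    apply continuous_tsum (fun n => continuous_const.mul (gc n)) hw
    intro n q
    show ‖w n * g n q‖ ≤ w n
    rw [Real.norm_eq_abs, abs_of_nonneg (hterm_nonneg n q)]
    exact hterm_le n q
  have hfp : f p = 1 := by
    rw [hfdef]
    simp only [gp, mul_one]
    exact hwsum
  have hf1 : ∀ q, f q ≤ 1 := fun q => by
    rw [hfdef]
    calc ∑' n, w n * g n q ≤ ∑' n, w n := Summable.tsum_le_tsum (fun n => hterm_le n q) (hfa q) hw
      _ = 1 := hwsum
  -- there exists x with f (unit x) = 1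
  have hexists : ∃ x : X, f (stoneCechUnit x) = 1 := by
    by_contra hno
    push_neg at hno
    have hlt : ∀ x : X, f (stoneCechUnit x) < 1 := fun x =>
      lt_of_le_of_ne (hf1 _) (hno x)
    have hdenpos : ∀ x : X, 0 < 1 - f (stoneCechUnit x) := fun x => by linarith [hlt x]
    set h : X → ℝ := fun x => (1 - f (stoneCechUnit x))⁻¹ with hhdef
    have hhc : Continuous h := by
      apply Continuous.inv₀ (continuous_const.sub (hfc.comp continuous_stoneCechUnit))
      exact fun x => (hdenpos x).ne'
    obtain ⟨M, hM⟩ := hpc h hhc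
    obtain ⟨x0⟩ := hneX
    have hMpos : 0 < M :=
      lt_of_lt_of_le (inv_pos.mpr (hdenpos x0)) ((le_abs_self _).trans (hM x0))
    have h4 : ∀ x : X, M⁻¹ ≤ 1 - f (stoneCechUnit x) := by
      intro x
      have h1 : (1 - f (stoneCechUnit x))⁻¹ ≤ M := (le_abs_self _).trans (hM x)
      have h3 : 1 ≤ M * (1 - f (stoneCechUnit x)) := by
        have := mul_le_mul_of_nonneg_right h1 (hdenpos x).le
        rwa [inv_mul_cancel₀ (hdenpos x).ne'] at this
      calc M⁻¹ = M⁻¹ * 1 := (mul_one _).symm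
        _ ≤ M⁻¹ * (M * (1 - f (stoneCechUnit x))) :=
            mul_le_mul_of_nonneg_left h3 (inv_nonneg.mpr hMpos.le)
        _ = 1 - f (stoneCechUnit x) := by field_simp
    have hSclosed : IsClosed {q : StoneCech X | f q ≤ 1 - M⁻¹} :=
      isClosed_le hfc continuous_const
    have hsub : Set.range (stoneCechUnit : X → StoneCech X) ⊆
        {q : StoneCech X | f q ≤ 1 - M⁻¹} := by
      rintro _ ⟨x, rfl⟩
      have := h4 x
      show f (stoneCechUnit x) ≤ 1 - M⁻¹
      linarith
    have hpS : p ∈ {q : StoneCech X | f q ≤ 1 - M⁻¹} :=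
      closure_minimal hsub hSclosed (denseRange_stoneCechUnit p)
    have : (0:ℝ) < M⁻¹ := inv_pos.mpr hMpos
    rw [Set.mem_setOf_eq, hfp] at hpS
    linarith
  obtain ⟨x, hx⟩ := hexists
  refine ⟨x, fun n => ?_⟩
  by_contra hq
  have hzero : g n (stoneCechUnit x) = 0 := g0 n _ hq
  have hlt : f (stoneCechUnit x) < ∑' n, w n := by
    refine Summable.tsum_lt_tsum (i := n) (fun m => hterm_le m _) ?_ (hfa _) hw
    rw [hzero, mul_zero]
    exact hwpos n
  rw [hwsum] at hlt
  exact hlt.ne hx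

end AuxProofs

/-- the extension ρ̄ of ρ(·, F'∩X) to βX satisfies (K1):
ρ̄(p, F'∩X) = 0 iff p ∈ F'. -/
theorem stmt16 {X : Type*} [TopologicalSpace X] [T35Space X]
    (hpc : Pseudocompact X) (ρ : X → Set X → ℝ) (hρ : IsCountKappaMetric ρ)
    (ρbar : StoneCech X → Set (StoneCech X) → ℝ)
    (hcont : ∀ F' : Set (StoneCech X), IsRegClosed F' → Continuous fun p => ρbar p F')
    (hext : ∀ F' : Set (StoneCech X), IsRegClosed F' →
      ∀ x : X, ρbar (stoneCechUnit x) F' = ρ x (stoneCechUnit ⁻¹' F'))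
    (p : StoneCech X) (F' : Set (StoneCech X)) (hF' : IsRegClosed F') :
    ρbar p F' = 0 ↔ p ∈ F' := by
  have hF : IsRegClosed (stoneCechUnit ⁻¹' F' : Set X) := regClosed_preimage F' hF'
  have hF'c : IsClosed F' := hF' ▸ isClosed_closure
  constructor
  · intro h0
    by_contra hp
    set U : ℕ → Set (StoneCech X) :=
      fun n => F'ᶜ ∩ {q | ρbar q F' < 1 / ((n : ℝ) + 1)} with hU
    have hUo : ∀ n, IsOpen (U n) := fun n =>
      hF'c.isOpen_compl.inter (isOpen_lt (hcont F' hF') continuous_const)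
    have hpU : ∀ n, p ∈ U n := fun n => ⟨hp, by rw [Set.mem_setOf_eq, h0]; positivity⟩
    obtain ⟨x, hx⟩ := exists_unit_mem_iInter hpc U hUo p hpU
    have hxF : ρ x (stoneCechUnit ⁻¹' F') = 0 := by
      have hle : ρ x (stoneCechUnit ⁻¹' F') ≤ 0 := by
        by_contra hc
        push_neg at hc
        obtain ⟨n, hn⟩ := exists_nat_one_div_lt hc
        have h2 := (hx n).2
        rw [Set.mem_setOf_eq, hext F' hF' x] at h2
        linarith
      exact le_antisymm hle (hρ.nonneg x _ hF)
    have hmem : stoneCechUnit x ∈ F' := by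
      have := (hρ.k1 x _ hF).mp hxF
      exact this
    exact (hx 0).1 hmem
  · intro hpF'
    have hS : IsClosed {q : StoneCech X | ρbar q F' = 0} :=
      isClosed_eq (hcont F' hF') continuous_const
    have hsub : stoneCechUnit '' (stoneCechUnit ⁻¹' (interior F') : Set X) ⊆
        {q : StoneCech X | ρbar q F' = 0} := by
      rintro _ ⟨a, ha, rfl⟩
      have haF : a ∈ (stoneCechUnit ⁻¹' F' : Set X) := Set.preimage_mono interior_subset ha
      show ρbar (stoneCechUnit a) F' = 0
      rw [hext F' hF' a]
      exact (hρ.k1 a _ hF).mpr haF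
    exact closure_minimal hsub hS (regClosed_subset_closure_image F' hF' hpF')
end
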